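/- arXiv:2501.19396 — 4 statements merged into one kernel-verified Lean document; each statement's English description precedes it below -/
import Mathlib

section
/- For all x, y > 0, with f(x) = (e^x − 1)⁻¹, one has y²(f(x) − f(y))² ≤ 4(x−y)²(x⁻² + y⁻²). -/
/-!
Write `f s = (exp s - 1)⁻¹`. Since `exp s - 1 = 2 exp (s/2) sinh (s/2)` and `|sinh u| ≥ |u|`,
`-f' s = exp s / (exp s - 1)² ≤ 1 / s²`, so `f s - 1/s` is increasing on `(0, ∞)` while `f` is
decreasing. Hence `|f x - f y| ≤ |1/x - 1/y|`, and `y² (1/x - 1/y)² = (x - y)² / x²`.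
-/

open Real Set

theorem exp_sub_one_eq_exp_half_mul_sinh (t : ℝ) :
    exp t - 1 = exp (t / 2) * (2 * sinh (t / 2)) := by
  rw [sinh_eq, mul_div_cancel₀ _ two_ne_zero, mul_sub, ← exp_add, ← exp_add, add_halves,
    add_neg_cancel, exp_zero]

theorem sq_mul_exp_le_exp_sub_one_sq (t : ℝ) : t ^ 2 * exp t ≤ (exp t - 1) ^ 2 := by
  have hsinh : (t / 2) ^ 2 ≤ sinh (t / 2) ^ 2 := by
    rw [← sq_abs, ← sq_abs (sinh _), abs_sinh]
    exact pow_le_pow_left₀ (abs_nonneg _) (self_le_sinh_iff.2 (abs_nonneg _)) 2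
  have hexp : exp t = exp (t / 2) ^ 2 := by rw [← exp_nat_mul]; ring_nf
  rw [exp_sub_one_eq_exp_half_mul_sinh, hexp]
  nlinarith [pow_pos (exp_pos (t / 2)) 2]

theorem exp_sub_one_pos {t : ℝ} (ht : 0 < t) : 0 < exp t - 1 := sub_pos.2 (one_lt_exp_iff.2 ht)

theorem hasDerivAt_inv_exp_sub_one {t : ℝ} (ht : t ≠ 0) :
    HasDerivAt (fun s ↦ (exp s - 1)⁻¹) (-exp t / (exp t - 1) ^ 2) t :=
  ((hasDerivAt_exp t).sub_const 1).inv (sub_ne_zero.2 (by rwa [Ne, exp_eq_one_iff]))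

theorem antitoneOn_inv_exp_sub_one : AntitoneOn (fun s ↦ (exp s - 1)⁻¹) (Ioi 0) :=
  fun a ha b _ hab ↦ inv_anti₀ (exp_sub_one_pos ha) (by gcongr)

theorem monotoneOn_inv_exp_sub_one_sub_inv :
    MonotoneOn (fun s ↦ (exp s - 1)⁻¹ - s⁻¹) (Ioi 0) := by
  have hderiv : ∀ t ∈ Ioi (0 : ℝ), HasDerivAt (fun s ↦ (exp s - 1)⁻¹ - s⁻¹)
      (-exp t / (exp t - 1) ^ 2 - -(t ^ 2)⁻¹) t := fun t ht ↦
    (hasDerivAt_inv_exp_sub_one (ne_of_gt ht)).sub (hasDerivAt_inv (ne_of_gt ht))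
  refine monotoneOn_of_hasDerivWithinAt_nonneg (convex_Ioi 0)
    (fun t ht ↦ (hderiv t ht).continuousAt.continuousWithinAt)
    (fun t ht ↦ (hderiv t (interior_subset ht)).hasDerivWithinAt) fun t ht ↦ ?_
  rw [interior_Ioi] at ht
  have hpos := exp_sub_one_pos ht
  rw [sub_nonneg, neg_div, neg_le_neg_iff, div_le_iff₀ (pow_pos hpos 2), inv_mul_eq_div,
    le_div_iff₀ (pow_pos ht 2), mul_comm]
  exact sq_mul_exp_le_exp_sub_one_sq t

theorem abs_inv_exp_sub_one_sub_le {x y : ℝ} (hx : 0 < x) (hy : 0 < y) :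
    |(exp x - 1)⁻¹ - (exp y - 1)⁻¹| ≤ |x⁻¹ - y⁻¹| := by
  wlog hxy : x ≤ y generalizing x y
  · rw [abs_sub_comm, abs_sub_comm x⁻¹]
    exact this hy hx (le_of_not_ge hxy)
  have hanti := antitoneOn_inv_exp_sub_one hx hy hxy
  have hmono := monotoneOn_inv_exp_sub_one_sub_inv hx hy hxy
  simp only at hanti hmono
  rw [abs_of_nonneg (sub_nonneg.2 hanti), abs_of_nonneg (sub_nonneg.2 (inv_anti₀ hx hxy))]
  linarith

/-- For all `x, y > 0`, with `f(x) = (e^x - 1)⁻¹`, one has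
`y² (f x - f y)² ≤ 4 (x - y)² (x⁻² + y⁻²)`. -/
theorem stmt_2 (x y : ℝ) (hx : 0 < x) (hy : 0 < y) :
    y ^ 2 * ((Real.exp x - 1)⁻¹ - (Real.exp y - 1)⁻¹) ^ 2 ≤
      4 * (x - y) ^ 2 * ((x ^ 2)⁻¹ + (y ^ 2)⁻¹) := by
  have hf : ((exp x - 1)⁻¹ - (exp y - 1)⁻¹) ^ 2 ≤ (x⁻¹ - y⁻¹) ^ 2 :=
    sq_le_sq.2 (abs_inv_exp_sub_one_sub_le hx hy)
  calc y ^ 2 * ((exp x - 1)⁻¹ - (exp y - 1)⁻¹) ^ 2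
      ≤ y ^ 2 * (x⁻¹ - y⁻¹) ^ 2 := by gcongr
    _ = (x - y) ^ 2 * (x ^ 2)⁻¹ := by field_simp; ring
    _ ≤ 4 * (x - y) ^ 2 * ((x ^ 2)⁻¹ + (y ^ 2)⁻¹) := by
      nlinarith [show 0 ≤ (x - y) ^ 2 * (x ^ 2)⁻¹ by positivity,
        show 0 ≤ (x - y) ^ 2 * (y ^ 2)⁻¹ by positivity]
end

section
/- Let A, B be hermitian matrices (or bounded self-adjoint operators with e^{−A} trace class) and define f(s) = Tr[B e^{−sA} B e^{−(1−s)A}] for s ∈ [0,1]. Then f''(s) = Tr(|e^{−sA/2}[B,A]e^{−(1−s)A/2}|²) ≥ 0, so f is convex on [0,1], and f satisfies f(s) = f(1−s). -/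
/-!
Diagonalize `A = U Λ U*` and write `B' = U* B U`. In this eigenbasis
`f s = ∑ᵢⱼ |B'ᵢⱼ|² exp (-λⱼ + s (λⱼ - λᵢ))`, a nonnegative combination of exponentials of affine
functions of `s`, so `f'' = ∑ᵢⱼ |B'ᵢⱼ|² (λⱼ - λᵢ)² exp (-λⱼ + s (λⱼ - λᵢ)) ≥ 0`. The matrix
`X = e^{-sA/2} [B, A] e^{-(1-s)A/2}` becomes `U Y U*` with `Yᵢⱼ = e^{-sλᵢ/2} B'ᵢⱼ (λⱼ - λᵢ) e^{-(1-s)λⱼ/2}`,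
and `Tr (X* X) = ∑ᵢⱼ |Yᵢⱼ|²` is exactly that sum. The symmetry `f s = f (1 - s)` is cyclicity of
the trace.
-/

open Matrix

section ExpSum

variable {ι : Type*} [Fintype ι] (w a b : ι → ℝ)

theorem hasDerivAt_sum_mul_exp_affine (s : ℝ) :
    HasDerivAt (fun s => ∑ k, w k * Real.exp (a k + s * b k))
      (∑ k, w k * b k * Real.exp (a k + s * b k)) s := by
  refine HasDerivAt.fun_sum fun k _ => ?_
  have := (((hasDerivAt_id s).mul_const (b k)).const_add (a k)).exp.const_mul (w k)
  simpa [mul_comm, mul_left_comm, mul_assoc] using this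

theorem deriv_sum_mul_exp_affine :
    deriv (fun s => ∑ k, w k * Real.exp (a k + s * b k)) =
      fun s => ∑ k, w k * b k * Real.exp (a k + s * b k) :=
  funext fun s => (hasDerivAt_sum_mul_exp_affine w a b s).deriv

theorem iteratedDeriv_two_sum_mul_exp_affine :
    iteratedDeriv 2 (fun s => ∑ k, w k * Real.exp (a k + s * b k)) =
      fun s => ∑ k, w k * b k ^ 2 * Real.exp (a k + s * b k) := by
  rw [iteratedDeriv_succ, iteratedDeriv_one, deriv_sum_mul_exp_affine,
    deriv_sum_mul_exp_affine]
  simp only [sq, mul_assoc]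

theorem convexOn_sum_mul_exp_affine (hw : 0 ≤ w) :
    ConvexOn ℝ Set.univ (fun s => ∑ k, w k * Real.exp (a k + s * b k)) := by
  refine convexOn_univ_of_deriv2_nonneg
    (fun s => (hasDerivAt_sum_mul_exp_affine w a b s).differentiableAt) ?_ fun s => ?_
  · rw [deriv_sum_mul_exp_affine]
    exact fun s => (hasDerivAt_sum_mul_exp_affine _ a b s).differentiableAt
  · rw [← iteratedDeriv_eq_iterate, iteratedDeriv_two_sum_mul_exp_affine]
    exact Finset.sum_nonneg fun k _ =>
      mul_nonneg (mul_nonneg (hw k) (sq_nonneg _)) (Real.exp_pos _).le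

end ExpSum

namespace Matrix

section Trace

variable {m n : Type*} [Fintype m] [Fintype n]

theorem re_trace_conjTranspose_mul_self (X : Matrix m n ℂ) :
    (Xᴴ * X).trace.re = ∑ p : m × n, Complex.normSq (X p.1 p.2) := by
  simp only [trace, diag, mul_apply, conjTranspose_apply, Complex.re_sum, Fintype.sum_prod_type]
  rw [Finset.sum_comm]
  simp [Complex.normSq_apply]

variable [DecidableEq n]

theorem re_trace_mul_diagonal_mul_mul_diagonal {B : Matrix n n ℂ} (hB : B.IsHermitian)
    (d e : n → ℝ) :
    (B * diagonal (fun i => (d i : ℂ)) * B * diagonal (fun i => (e i : ℂ))).trace.re =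
      ∑ p : n × n, Complex.normSq (B p.1 p.2) * (d p.1 * e p.2) := by
  simp only [trace, diag, mul_diagonal, mul_apply (M := B * _) (N := B), Complex.re_sum,
    Fintype.sum_prod_type, Finset.sum_mul]
  rw [Finset.sum_comm]
  refine Finset.sum_congr rfl fun i _ => Finset.sum_congr rfl fun j _ => ?_
  rw [← hB.apply j i, Complex.star_def, ← Complex.ofReal_re (Complex.normSq _ * _)]
  push_cast
  rw [Complex.normSq_eq_conj_mul_self]
  ring_nf

theorem re_trace_conjTranspose_mul_self_diagonal_commutator (B : Matrix n n ℂ) (l d e : n → ℝ) :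
    ((diagonal (fun i => (d i : ℂ)) *
          (B * diagonal (fun i => (l i : ℂ)) - diagonal (fun i => (l i : ℂ)) * B) *
          diagonal (fun i => (e i : ℂ)))ᴴ *
        (diagonal (fun i => (d i : ℂ)) *
          (B * diagonal (fun i => (l i : ℂ)) - diagonal (fun i => (l i : ℂ)) * B) *
          diagonal (fun i => (e i : ℂ)))).trace.re =
      ∑ p : n × n, Complex.normSq (B p.1 p.2) * (l p.2 - l p.1) ^ 2 * (d p.1 * e p.2) ^ 2 := by
  rw [re_trace_conjTranspose_mul_self]
  refine Finset.sum_congr rfl fun p _ => ?_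
  have hentry : (diagonal (fun i => (d i : ℂ)) *
      (B * diagonal (fun i => (l i : ℂ)) - diagonal (fun i => (l i : ℂ)) * B) *
      diagonal (fun i => (e i : ℂ))) p.1 p.2 =
        B p.1 p.2 * ((l p.2 - l p.1) * (d p.1 * e p.2) : ℝ) := by
    simp only [mul_diagonal, diagonal_mul, Matrix.sub_apply]
    push_cast
    ring
  rw [hentry, Complex.normSq_mul, Complex.normSq_ofReal]
  ring

end Trace

section Conjugation

variable {n 𝕜 : Type*} [Fintype n] [DecidableEq n] [RCLike 𝕜]

theorem trace_conjStarAlgAut (u : unitary (Matrix n n 𝕜)) (X : Matrix n n 𝕜) :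
    (Unitary.conjStarAlgAut 𝕜 _ u X).trace = X.trace := by
  rw [Unitary.conjStarAlgAut_apply, trace_mul_cycle, Unitary.coe_star_mul_self, one_mul]

theorem exp_conjStarAlgAut (u : unitary (Matrix n n 𝕜)) (X : Matrix n n 𝕜) :
    NormedSpace.exp (Unitary.conjStarAlgAut 𝕜 _ u X) =
      Unitary.conjStarAlgAut 𝕜 _ u (NormedSpace.exp X) := by
  have hinv : (u : Matrix n n 𝕜)⁻¹ = star (u : Matrix n n 𝕜) :=
    inv_eq_left_inv (Unitary.coe_star_mul_self u)
  simp only [Unitary.conjStarAlgAut_apply, ← hinv]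
  exact exp_conj _ X (Unitary.toUnits u).isUnit

theorem exp_real_smul_diagonal (t : ℝ) (d : n → ℝ) :
    NormedSpace.exp (t • diagonal (fun i => (d i : ℂ))) =
      diagonal (fun i => (Real.exp (t * d i) : ℂ)) := by
  rw [← diagonal_smul, exp_diagonal]
  congr 1
  funext i
  simp [Pi.coe_exp, ← Complex.exp_eq_exp_ℂ, Complex.ofReal_exp]

theorem IsHermitian.exp_real_smul {A : Matrix n n ℂ} (hA : A.IsHermitian) (t : ℝ) :
    NormedSpace.exp (t • A) = Unitary.conjStarAlgAut ℂ _ hA.eigenvectorUnitary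
      (diagonal fun i => (Real.exp (t * hA.eigenvalues i) : ℂ)) := by
  conv_lhs => rw [hA.spectral_theorem, ← LinearMapClass.map_smul_of_tower]
  rw [exp_conjStarAlgAut]
  exact congrArg _ (exp_real_smul_diagonal t hA.eigenvalues)

end Conjugation

namespace IsHermitian

variable {n : Type*} [Fintype n] [DecidableEq n] {A : Matrix n n ℂ}

noncomputable def toEigenbasis (hA : A.IsHermitian) (B : Matrix n n ℂ) : Matrix n n ℂ :=
  (Unitary.conjStarAlgAut ℂ _ hA.eigenvectorUnitary).symm B

theorem eq_conjStarAlgAut_toEigenbasis (hA : A.IsHermitian) (B : Matrix n n ℂ) :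
    B = Unitary.conjStarAlgAut ℂ _ hA.eigenvectorUnitary (hA.toEigenbasis B) :=
  (StarAlgEquiv.apply_symm_apply _ B).symm

theorem re_trace_mul_exp_mul_mul_exp (hA : A.IsHermitian) {B : Matrix n n ℂ}
    (hB : B.IsHermitian) (s t : ℝ) :
    (B * NormedSpace.exp (s • A) * B * NormedSpace.exp (t • A)).trace.re =
      ∑ p : n × n, Complex.normSq (hA.toEigenbasis B p.1 p.2) *
        Real.exp (s * hA.eigenvalues p.1 + t * hA.eigenvalues p.2) := by
  have hB' : (hA.toEigenbasis B).IsHermitian := IsSelfAdjoint.map hB _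
  conv_lhs => rw [hA.exp_real_smul, hA.exp_real_smul, hA.eq_conjStarAlgAut_toEigenbasis B,
    ← map_mul, ← map_mul, ← map_mul, trace_conjStarAlgAut]
  simp only [re_trace_mul_diagonal_mul_mul_diagonal hB', Real.exp_add]

theorem re_trace_conjTranspose_mul_self_exp_commutator (hA : A.IsHermitian)
    (B : Matrix n n ℂ) (s t : ℝ) :
    ((NormedSpace.exp (s • A) * (B * A - A * B) * NormedSpace.exp (t • A))ᴴ *
        (NormedSpace.exp (s • A) * (B * A - A * B) * NormedSpace.exp (t • A))).trace.re =
      ∑ p : n × n, Complex.normSq (hA.toEigenbasis B p.1 p.2) *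
        (hA.eigenvalues p.2 - hA.eigenvalues p.1) ^ 2 *
        Real.exp (2 * (s * hA.eigenvalues p.1 + t * hA.eigenvalues p.2)) := by
  set W := Unitary.conjStarAlgAut ℂ (Matrix n n ℂ) hA.eigenvectorUnitary
  set D : Matrix n n ℂ := diagonal fun i => (hA.eigenvalues i : ℂ)
  have hAW : A = W D := hA.spectral_theorem
  have hC : B * A - A * B = W (hA.toEigenbasis B * D - D * hA.toEigenbasis B) := by
    rw [map_sub, map_mul, map_mul, ← hA.eq_conjStarAlgAut_toEigenbasis B, ← hAW]
  rw [hA.exp_real_smul, hA.exp_real_smul, hC, ← map_mul, ← map_mul, ← star_eq_conjTranspose,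
    ← map_star, ← map_mul, trace_conjStarAlgAut, star_eq_conjTranspose,
    re_trace_conjTranspose_mul_self_diagonal_commutator]
  refine Finset.sum_congr rfl fun p _ => ?_
  rw [← Real.exp_add, sq (Real.exp _), ← Real.exp_add]
  ring_nf

end IsHermitian

end Matrix

/-- Convexity and symmetry of the Duhamel correlation function: for Hermitian matrices
`A, B` and `f(s) = Tr[B e^{-sA} B e^{-(1-s)A}]`, `f` is convex on `[0,1]`, symmetric
under `s ↦ 1-s`, and `f''(s) = Tr(|e^{-sA/2}[B,A]e^{-(1-s)A/2}|²) ≥ 0`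
(with `[B,A] = BA - AB` and `|X|² = Xᴴ X`). -/
theorem stmt_9 {n : ℕ} (A B : Matrix (Fin n) (Fin n) ℂ)
    (hA : A.IsHermitian) (hB : B.IsHermitian) (f : ℝ → ℝ)
    (hf : ∀ s : ℝ, f s =
      ((B * NormedSpace.exp ((-s) • A) * B * NormedSpace.exp ((-(1 - s)) • A)).trace).re) :
    ConvexOn ℝ (Set.Icc (0 : ℝ) 1) f ∧
    (∀ s : ℝ, f s = f (1 - s)) ∧
    (∀ s : ℝ,
      iteratedDeriv 2 f s =
        (((NormedSpace.exp ((-(s / 2)) • A) * (B * A - A * B) *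
              NormedSpace.exp ((-((1 - s) / 2)) • A))ᴴ *
            (NormedSpace.exp ((-(s / 2)) • A) * (B * A - A * B) *
              NormedSpace.exp ((-((1 - s) / 2)) • A))).trace).re ∧
      0 ≤ iteratedDeriv 2 f s) := by
  set w : Fin n × Fin n → ℝ := fun p => Complex.normSq (hA.toEigenbasis B p.1 p.2)
  set l := hA.eigenvalues
  have hfF : f = fun s => ∑ p, w p * Real.exp (-l p.2 + s * (l p.2 - l p.1)) := by
    funext s
    rw [hf, hA.re_trace_mul_exp_mul_mul_exp hB]
    exact Finset.sum_congr rfl fun p _ => by congr 2; ring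
  have hf'' : ∀ s, iteratedDeriv 2 f s =
      ∑ p, w p * (l p.2 - l p.1) ^ 2 * Real.exp (-l p.2 + s * (l p.2 - l p.1)) := by
    intro s
    rw [hfF, iteratedDeriv_two_sum_mul_exp_affine]
  refine ⟨?_, fun s => ?_, fun s => ⟨?_, ?_⟩⟩
  · rw [hfF]
    exact (convexOn_sum_mul_exp_affine _ _ _ fun p => Complex.normSq_nonneg _).subset
      (Set.subset_univ _) (convex_Icc 0 1)
  · rw [hf, hf, sub_sub_cancel, Matrix.mul_assoc (B * _), trace_mul_comm, ← Matrix.mul_assoc]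
  · rw [hf'', hA.re_trace_conjTranspose_mul_self_exp_commutator]
    exact Finset.sum_congr rfl fun p _ => by congr 2; ring
  · rw [hf'']
    exact Finset.sum_nonneg fun p _ =>
      mul_nonneg (mul_nonneg (Complex.normSq_nonneg _) (sq_nonneg _)) (Real.exp_pos _).le
end

section
/- Let Θ(x) = (1 + √π·x·e^{x²}·erfc(−x)) / (e^{x²}·erfc(−x)), where erfc(x) = (2/√π)∫_x^∞ e^{−t²} dt. Then Θ is strictly positive, continuous and strictly monotone increasing on ℝ, Θ(x)/(√π x) → 1 as x → +∞, and Θ(x)·(2|x|/√π) → 1 as x → −∞. -/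
open MeasureTheory Filter

/-- The complementary error function `erfc(x) = (2/√π) ∫_x^∞ e^{-t²} dt`. -/
noncomputable def erfc (x : ℝ) : ℝ :=
  (2 / Real.sqrt Real.pi) * ∫ t in Set.Ici x, Real.exp (-t ^ 2)

/-- `Θ(x) = (1 + √π x e^{x²} erfc(-x)) / (e^{x²} erfc(-x))`. -/
noncomputable def Theta (x : ℝ) : ℝ :=
  (1 + Real.sqrt Real.pi * x * Real.exp (x ^ 2) * erfc (-x)) /
    (Real.exp (x ^ 2) * erfc (-x))

/-!
Write `J x = ∫ t in Iic x, exp (-t ^ 2)`, so that `erfc (-x) = (2 / √π) J x` and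
`Θ x = √π x + (√π / 2) exp (-x ^ 2) / J x`. Everything rests on the Mills-ratio bounds
`-x exp (-x ^ 2) / (2 x ^ 2 + 1) < J x` (all `x`) and
`J x < -x exp (-x ^ 2) / (2 x ^ 2 + 1 - x⁻²)` (`x < -1`), each proved by noting that the
difference of the two sides has positive derivative and vanishes at `-∞`.
The same argument shows `Q = J ^ 2 - x exp (-x ^ 2) J - exp (-x ^ 2) ^ 2 / 2 > 0`, since
`Q' = exp (-x ^ 2) ((2 x ^ 2 + 1) J + x exp (-x ^ 2))` is positive by the first bound; as
`Θ' = √π Q / J ^ 2`, `Θ` is strictly increasing. For `x < 0`,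
`Θ x · 2|x|/√π = -2 x ^ 2 - x exp (-x ^ 2) / J x`, which the two bounds squeeze between
`1 - x⁻²` and `1`. In particular `Θ → 0` at `-∞`, which together with monotonicity gives
`Θ > 0`.
-/

open Real Set Topology

lemma sqrt_pi_pos : 0 < √π := sqrt_pos.2 pi_pos

lemma StrictMonoOn.pos_of_tendsto_atBot {f : ℝ → ℝ} {a x : ℝ} (hf : StrictMonoOn f (Iio a))
    (h0 : Tendsto f atBot (𝓝 0)) (hx : x < a) : 0 < f x := by
  have hx' : x - 1 < a := by linarith
  have hnonneg : 0 ≤ f (x - 1) := by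
    refine le_of_tendsto h0 ?_
    filter_upwards [eventually_lt_atBot (x - 1)] with y hy
    exact (hf (hy.trans hx') hx' hy).le
  exact hnonneg.trans_lt (hf hx' hx (by linarith))

lemma pos_of_hasDerivAt_pos_of_tendsto_atBot {f f' : ℝ → ℝ} {a x : ℝ}
    (hf : ∀ y < a, HasDerivAt f (f' y) y) (hf' : ∀ y < a, 0 < f' y)
    (h0 : Tendsto f atBot (𝓝 0)) (hx : x < a) : 0 < f x := by
  refine StrictMonoOn.pos_of_tendsto_atBot ?_ h0 hx
  refine strictMonoOn_of_hasDerivWithinAt_pos (f' := f') (convex_Iio a)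
    (fun y hy => (hf y hy).continuousAt.continuousWithinAt) ?_ ?_ <;> rw [interior_Iio]
  · exact fun y hy => (hf y hy).hasDerivWithinAt
  · exact hf'

lemma tendsto_sq_atBot : Tendsto (fun x : ℝ => x ^ 2) atBot atTop := by
  simpa [Function.comp_def] using
    (tendsto_pow_atTop (α := ℝ) two_ne_zero).comp tendsto_abs_atBot_atTop

lemma tendsto_pow_mul_exp_neg_sq_cocompact (n : ℕ) :
    Tendsto (fun x : ℝ => x ^ n * exp (-x ^ 2)) (cocompact ℝ) (𝓝 0) := by
  refine tendsto_zero_iff_norm_tendsto_zero.2 ?_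
  simpa [abs_mul, abs_pow] using tendsto_rpow_abs_mul_exp_neg_mul_sq_cocompact one_pos n

lemma tendsto_mul_exp_neg_sq_div_atBot {D : ℝ → ℝ} (hD : Tendsto D atBot atTop) :
    Tendsto (fun x => x * exp (-x ^ 2) / D x) atBot (𝓝 0) := by
  simpa [div_eq_mul_inv] using
    ((tendsto_pow_mul_exp_neg_sq_cocompact 1).mono_left atBot_le_cocompact).mul
      hD.inv_tendsto_atTop

lemma hasDerivAt_exp_neg_sq (x : ℝ) :
    HasDerivAt (fun t => exp (-t ^ 2)) (-2 * x * exp (-x ^ 2)) x := by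
  have h : HasDerivAt (fun t : ℝ => -t ^ 2) (-(2 * x)) x := by
    simpa using (hasDerivAt_pow 2 x).fun_neg
  convert h.exp using 1
  ring

noncomputable def gaussIic (x : ℝ) : ℝ := ∫ t in Iic x, exp (-t ^ 2)

lemma integrable_exp_neg_sq : Integrable fun t : ℝ => exp (-t ^ 2) := by
  simpa using integrable_exp_neg_mul_sq one_pos

lemma hasDerivAt_gaussIic (x : ℝ) : HasDerivAt gaussIic (exp (-x ^ 2)) x := by
  have hcont : Continuous fun t : ℝ => exp (-t ^ 2) := by fun_prop
  have hFTC : HasDerivAt (fun y => gaussIic 0 + ∫ t in (0 : ℝ)..y, exp (-t ^ 2))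
      (exp (-x ^ 2)) x :=
    (intervalIntegral.integral_hasDerivAt_right integrable_exp_neg_sq.intervalIntegrable
      hcont.aestronglyMeasurable.stronglyMeasurableAtFilter hcont.continuousAt).const_add _
  refine hFTC.congr_of_eventuallyEq (Eventually.of_forall fun y => ?_)
  dsimp only
  rw [← intervalIntegral.integral_Iic_sub_Iic integrable_exp_neg_sq.integrableOn
    integrable_exp_neg_sq.integrableOn, gaussIic, gaussIic]
  ring

lemma tendsto_gaussIic_atBot : Tendsto gaussIic atBot (𝓝 0) :=
  tendsto_integral_Iic_zero tendsto_id

lemma strictMono_gaussIic : StrictMono gaussIic :=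
  strictMono_of_hasDerivAt_pos hasDerivAt_gaussIic fun _ => exp_pos _

lemma gaussIic_pos (x : ℝ) : 0 < gaussIic x :=
  strictMono_gaussIic.strictMonoOn _ |>.pos_of_tendsto_atBot tendsto_gaussIic_atBot
    (lt_add_one x)

lemma erfc_neg (x : ℝ) : erfc (-x) = 2 / √π * gaussIic x := by
  have h := integral_comp_neg_Ioi (-x) (fun t : ℝ => exp (-t ^ 2))
  simp only [neg_neg, neg_sq] at h
  rw [erfc, gaussIic, integral_Ici_eq_integral_Ioi, h]

lemma Theta_eq (x : ℝ) : Theta x = √π * x + √π / 2 * (exp (-x ^ 2) / gaussIic x) := by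
  have hJ := (gaussIic_pos x).ne'
  have hπ : √π ≠ 0 := sqrt_pi_pos.ne'
  rw [Theta, erfc_neg, exp_neg]
  field_simp
  ring

lemma neg_mul_exp_neg_sq_div_lt_gaussIic (x : ℝ) :
    -x * exp (-x ^ 2) / (2 * x ^ 2 + 1) < gaussIic x := by
  have hderiv (y : ℝ) : HasDerivAt (fun y => gaussIic y + y * exp (-y ^ 2) / (2 * y ^ 2 + 1))
      (2 * exp (-y ^ 2) / (2 * y ^ 2 + 1) ^ 2) y := by
    have hD : HasDerivAt (fun y : ℝ => 2 * y ^ 2 + 1) (2 * (2 * y)) y := by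
      simpa using ((hasDerivAt_pow 2 y).const_mul 2).add_const 1
    refine ((hasDerivAt_gaussIic y).fun_add (((hasDerivAt_id' y).fun_mul
      (hasDerivAt_exp_neg_sq y)).fun_div hD (by positivity))).congr_deriv ?_
    field_simp
    ring
  have hlim :
      Tendsto (fun y => gaussIic y + y * exp (-y ^ 2) / (2 * y ^ 2 + 1)) atBot (𝓝 0) := by
    simpa using tendsto_gaussIic_atBot.add (tendsto_mul_exp_neg_sq_div_atBot
      (tendsto_atTop_add_const_right _ 1 (tendsto_sq_atBot.const_mul_atTop two_pos)))
  have := pos_of_hasDerivAt_pos_of_tendsto_atBot (fun y _ => hderiv y)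
    (fun _ _ => by positivity) hlim (lt_add_one x)
  rw [neg_mul, neg_div]
  linarith

lemma two_mul_sq_add_one_sub_inv_sq_pos {x : ℝ} (hx : 1 ≤ x ^ 2) :
    0 < 2 * x ^ 2 + 1 - (x ^ 2)⁻¹ := by
  have : (x ^ 2)⁻¹ ≤ 1 := inv_le_one_of_one_le₀ hx
  linarith

lemma gaussIic_lt_neg_mul_exp_neg_sq_div {x : ℝ} (hx : x < -1) :
    gaussIic x < -x * exp (-x ^ 2) / (2 * x ^ 2 + 1 - (x ^ 2)⁻¹) := by
  have hD (y : ℝ) (hy : y < -1) : 0 < 2 * y ^ 2 + 1 - (y ^ 2)⁻¹ :=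
    two_mul_sq_add_one_sub_inv_sq_pos (by nlinarith)
  have hderiv (y : ℝ) (hy : y < -1) :
      HasDerivAt (fun y => -y * exp (-y ^ 2) / (2 * y ^ 2 + 1 - (y ^ 2)⁻¹) - gaussIic y)
        (exp (-y ^ 2) * (5 * y ^ 2 - 1) / (y ^ 4 * (2 * y ^ 2 + 1 - (y ^ 2)⁻¹) ^ 2)) y := by
    have hy0 : y ≠ 0 := by linarith
    have hD' : HasDerivAt (fun y : ℝ => 2 * y ^ 2 + 1 - (y ^ 2)⁻¹)
        (2 * (2 * y) + 2 * y / (y ^ 2) ^ 2) y := by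
      refine ((((hasDerivAt_pow 2 y).const_mul 2).add_const 1).fun_sub
        ((hasDerivAt_pow 2 y).fun_inv (pow_ne_zero 2 hy0))).congr_deriv ?_
      field_simp
      ring
    refine ((((hasDerivAt_id' y).fun_neg.fun_mul (hasDerivAt_exp_neg_sq y)).fun_div hD'
      (hD y hy).ne').fun_sub (hasDerivAt_gaussIic y)).congr_deriv ?_
    have : y ^ 2 * (y ^ 2 * 2 + 1) - 1 ≠ 0 := by nlinarith
    field_simp
    ring
  have hlim : Tendsto (fun y => -y * exp (-y ^ 2) / (2 * y ^ 2 + 1 - (y ^ 2)⁻¹) - gaussIic y)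
      atBot (𝓝 0) := by
    have hD : Tendsto (fun y : ℝ => 2 * y ^ 2 + 1 - (y ^ 2)⁻¹) atBot atTop := by
      simpa [add_sub_assoc] using (tendsto_sq_atBot.const_mul_atTop two_pos).atTop_add
        (tendsto_sq_atBot.inv_tendsto_atTop.const_sub 1)
    simpa [neg_mul, neg_div] using
      (tendsto_mul_exp_neg_sq_div_atBot hD).neg.sub tendsto_gaussIic_atBot
  have := pos_of_hasDerivAt_pos_of_tendsto_atBot hderiv (fun y hy => ?_) hlim hx
  · linarith
  · have h5 : 0 < 5 * y ^ 2 - 1 := by nlinarith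
    have hy0 : y ≠ 0 := by linarith
    exact div_pos (mul_pos (exp_pos _) h5) (mul_pos (by positivity) (pow_pos (hD y hy) 2))

lemma sq_gaussIic_sub_pos (x : ℝ) :
    0 < gaussIic x ^ 2 - x * exp (-x ^ 2) * gaussIic x - exp (-x ^ 2) ^ 2 / 2 := by
  have hderiv (y : ℝ) : HasDerivAt
      (fun y => gaussIic y ^ 2 - y * exp (-y ^ 2) * gaussIic y - exp (-y ^ 2) ^ 2 / 2)
      (exp (-y ^ 2) * ((2 * y ^ 2 + 1) * gaussIic y + y * exp (-y ^ 2))) y := by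
    have hg := hasDerivAt_exp_neg_sq y
    have hJ := hasDerivAt_gaussIic y
    refine (((hJ.fun_pow 2).fun_sub (((hasDerivAt_id' y).fun_mul hg).fun_mul hJ)).fun_sub
      ((hg.fun_pow 2).div_const 2)).congr_deriv ?_
    ring
  have hderiv_pos (y : ℝ) :
      0 < exp (-y ^ 2) * ((2 * y ^ 2 + 1) * gaussIic y + y * exp (-y ^ 2)) := by
    have := neg_mul_exp_neg_sq_div_lt_gaussIic y
    rw [div_lt_iff₀ (by positivity)] at this
    exact mul_pos (exp_pos _) (by linarith)
  have hlim : Tendsto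
      (fun y => gaussIic y ^ 2 - y * exp (-y ^ 2) * gaussIic y - exp (-y ^ 2) ^ 2 / 2)
      atBot (𝓝 0) := by
    have hg := (tendsto_pow_mul_exp_neg_sq_cocompact 0).mono_left atBot_le_cocompact
    have hxg := (tendsto_pow_mul_exp_neg_sq_cocompact 1).mono_left atBot_le_cocompact
    have hJ := tendsto_gaussIic_atBot
    simp only [pow_zero, one_mul, pow_one] at hg hxg
    simpa using ((hJ.pow 2).sub (hxg.mul hJ)).sub ((hg.pow 2).div_const 2)
  exact (pos_of_hasDerivAt_pos_of_tendsto_atBot (fun y _ => hderiv y)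
    (fun y _ => hderiv_pos y) hlim (lt_add_one x) :)

lemma hasDerivAt_Theta (x : ℝ) : HasDerivAt Theta
    (√π * (gaussIic x ^ 2 - x * exp (-x ^ 2) * gaussIic x - exp (-x ^ 2) ^ 2 / 2) /
      gaussIic x ^ 2) x := by
  have hJ := (gaussIic_pos x).ne'
  rw [show Theta = fun y => √π * y + √π / 2 * (exp (-y ^ 2) / gaussIic y) from
    funext Theta_eq]
  refine (((hasDerivAt_id' x).const_mul √π).fun_add (((hasDerivAt_exp_neg_sq x).fun_div
    (hasDerivAt_gaussIic x) hJ).const_mul _)).congr_deriv ?_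
  field_simp
  ring

lemma strictMono_Theta : StrictMono Theta :=
  strictMono_of_hasDerivAt_pos hasDerivAt_Theta fun x =>
    div_pos (mul_pos sqrt_pi_pos (sq_gaussIic_sub_pos x)) (pow_pos (gaussIic_pos x) 2)

lemma continuous_Theta : Continuous Theta :=
  continuous_iff_continuousAt.2 fun x => (hasDerivAt_Theta x).continuousAt

lemma tendsto_Theta_div_atTop : Tendsto (fun x => Theta x / (√π * x)) atTop (𝓝 1) := by
  have hJ0 := gaussIic_pos 0
  have hg := ((tendsto_pow_mul_exp_neg_sq_cocompact 0).mono_left atTop_le_cocompact).div_const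
    (2 * gaussIic 0)
  simp only [pow_zero, one_mul, zero_div] at hg
  have hremainder : Tendsto (fun x => exp (-x ^ 2) / (2 * x * gaussIic x)) atTop (𝓝 0) := by
    refine squeeze_zero' ?_ ?_ hg
    · filter_upwards [eventually_gt_atTop 0] with x hx
      have := gaussIic_pos x
      positivity
    · filter_upwards [eventually_ge_atTop 1] with x hx
      have hmono : gaussIic 0 ≤ gaussIic x := strictMono_gaussIic.monotone (by linarith)
      have := gaussIic_pos x
      exact div_le_div_of_nonneg_left (exp_pos _).le (by positivity) (by nlinarith)
  refine Tendsto.congr' ?_ (by simpa using hremainder.const_add 1)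
  filter_upwards [eventually_gt_atTop 0] with x hx
  have := (gaussIic_pos x).ne'
  have : √π ≠ 0 := sqrt_pi_pos.ne'
  rw [Theta_eq]
  field_simp

lemma Theta_mul_eq {x : ℝ} (hx : x < 0) :
    Theta x * (2 * |x| / √π) = -2 * x ^ 2 + -x * exp (-x ^ 2) / gaussIic x := by
  have := (gaussIic_pos x).ne'
  have : √π ≠ 0 := sqrt_pi_pos.ne'
  rw [Theta_eq, abs_of_neg hx]
  field_simp
  ring

lemma tendsto_Theta_mul_atBot :
    Tendsto (fun x => Theta x * (2 * |x| / √π)) atBot (𝓝 1) := by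
  have hlow : Tendsto (fun x : ℝ => 1 - (x ^ 2)⁻¹) atBot (𝓝 1) := by
    simpa using tendsto_sq_atBot.inv_tendsto_atTop.const_sub 1
  refine tendsto_of_tendsto_of_tendsto_of_le_of_le' hlow tendsto_const_nhds ?_ ?_
  · filter_upwards [eventually_lt_atBot (-1)] with x hx
    have hJ := gaussIic_pos x
    have hD := two_mul_sq_add_one_sub_inv_sq_pos (by nlinarith : 1 ≤ x ^ 2)
    have : 2 * x ^ 2 + 1 - (x ^ 2)⁻¹ < -x * exp (-x ^ 2) / gaussIic x := by
      rw [lt_div_iff₀ hJ, mul_comm _ (gaussIic x), ← lt_div_iff₀ hD]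
      exact gaussIic_lt_neg_mul_exp_neg_sq_div hx
    rw [Theta_mul_eq (by linarith)]
    linarith
  · filter_upwards [eventually_lt_atBot 0] with x hx
    have hJ := gaussIic_pos x
    have : -x * exp (-x ^ 2) / gaussIic x < 2 * x ^ 2 + 1 := by
      rw [div_lt_iff₀ hJ, mul_comm _ (gaussIic x), ← div_lt_iff₀ (by positivity)]
      exact neg_mul_exp_neg_sq_div_lt_gaussIic x
    rw [Theta_mul_eq hx]
    linarith

lemma tendsto_Theta_atBot : Tendsto Theta atBot (𝓝 0) := by
  have h := tendsto_Theta_mul_atBot.mul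
    (tendsto_abs_atBot_atTop.inv_tendsto_atTop.const_mul (√π / 2))
  simp only [mul_zero] at h
  refine h.congr' ?_
  filter_upwards [eventually_lt_atBot 0] with x hx
  have : √π ≠ 0 := sqrt_pi_pos.ne'
  have : |x| ≠ 0 := abs_ne_zero.2 hx.ne
  simp only [Pi.inv_apply]
  field_simp

lemma Theta_pos (x : ℝ) : 0 < Theta x :=
  strictMono_Theta.strictMonoOn _ |>.pos_of_tendsto_atBot tendsto_Theta_atBot (lt_add_one x)

/-- `Θ` is strictly positive, continuous and strictly increasing on `ℝ`,
`Θ(x) ≃ √π x` as `x → +∞` and `Θ(x) ≃ √π/(2|x|)` as `x → -∞`. -/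
theorem stmt_16 :
    (∀ x : ℝ, 0 < Theta x) ∧ Continuous Theta ∧ StrictMono Theta ∧
      Tendsto (fun x => Theta x / (Real.sqrt Real.pi * x)) atTop (nhds 1) ∧
      Tendsto (fun x => Theta x * (2 * |x| / Real.sqrt Real.pi)) atBot (nhds 1) :=
  ⟨Theta_pos, continuous_Theta, strictMono_Theta, tendsto_Theta_div_atTop,
    tendsto_Theta_mul_atBot⟩
end

section
/- Let X_j be nonnegative real random variables with means m_j and standard deviations σ_j, set X̃_j = (X_j − m_j)/σ_j, and assume σ_j → ∞, m_j/σ_j² → 0, and limsup_j E[exp(λ|X̃_j|)] ≤ C for all 0 < λ < λ₀. Let Y_j be randomized Poisson variables with P(Y_j = n) = E[X_j^n e^{−X_j}]/n! and Ỹ_j = (Y_j − m_j)/σ_j. Then for every t ∈ ℝ, |E[e^{itỸ_j}] − E[e^{itX̃_j}]| → 0 as j → ∞. -/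
/-!
Given `X = x`, the variable `Y` is Poisson with mean `x`, so `E[z^Y] = E[exp((z - 1) X)]` for
`‖z‖ ≤ 1`. With `s = t / σ`, both characteristic functions carry the same phase `e^{-ism}`, and
after removing it they are `E[exp((e^{is} - 1) X)]` and `E[e^{isX}]`. As `exp` is 1-Lipschitz on
the left half-plane and `‖e^{is} - 1 - is‖ ≤ 2 s²`, they differ by at most
`2 s² E[X] = 2 t² m / σ²`, which tends to `0`.
-/

open MeasureTheory Filter

section

open Complex

theorem Complex.norm_exp_sub_exp_le_of_re_nonpos {z w : ℂ} (hz : z.re ≤ 0) (hw : w.re ≤ 0) :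
    ‖exp z - exp w‖ ≤ ‖z - w‖ := by
  simpa using Convex.norm_image_sub_le_of_norm_hasDerivWithin_le
    (f := exp) (C := 1) (s := {c : ℂ | c.re ≤ 0}) (fun u _ => (hasDerivAt_exp u).hasDerivWithinAt)
    (fun u hu => by simpa [norm_exp] using hu) (convex_halfSpace_re_le 0) hw hz

theorem Complex.norm_exp_I_mul_ofReal_sub_one_sub_le (x : ℝ) :
    ‖exp (I * x) - 1 - I * x‖ ≤ 2 * x ^ 2 := by
  have hIx : ‖I * x‖ = |x| := by simp
  rcases le_total |x| 1 with hx | hx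
  · have := norm_exp_sub_one_sub_id_le (x := I * x) (by rwa [hIx])
    rw [hIx, sq_abs] at this
    nlinarith [sq_nonneg x]
  · calc ‖exp (I * x) - 1 - I * x‖ ≤ ‖exp (I * x) - 1‖ + ‖I * x‖ := norm_sub_le _ _
      _ ≤ |x| + |x| := by rw [hIx]; gcongr; exact Real.norm_exp_I_mul_ofReal_sub_one_le
      _ ≤ 2 * x ^ 2 := by nlinarith [sq_abs x]

variable {Ω : Type*} [MeasurableSpace Ω] {P : Measure Ω} {X : Ω → ℝ}

/-- `P(Y = n)` for the Poisson variable `Y` with random mean `X`. -/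
noncomputable def mixedPoissonProb (P : Measure Ω) (X : Ω → ℝ) (n : ℕ) : ℝ :=
  (∫ ω, X ω ^ n * Real.exp (-X ω) ∂P) / n.factorial

theorem Real.hasSum_pow_mul_exp_neg_div_factorial (x : ℝ) :
    HasSum (fun n : ℕ => x ^ n * Real.exp (-x) / n.factorial) 1 := by
  have h := (NormedSpace.expSeries_div_hasSum_exp x).mul_right (Real.exp (-x))
  rw [← Real.exp_eq_exp_ℝ, ← Real.exp_add, add_neg_cancel, Real.exp_zero] at h
  simpa only [div_mul_eq_mul_div] using h

theorem hasSum_mixedPoissonProb_mul_pow [IsFiniteMeasure P] (hX : AEStronglyMeasurable X P)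
    (hX0 : 0 ≤ᵐ[P] X) {z : ℂ} (hz : ‖z‖ ≤ 1) :
    HasSum (fun n => (mixedPoissonProb P X n : ℂ) * z ^ n) (∫ ω, exp ((z - 1) * X ω) ∂P) := by
  have hintegral (n : ℕ) : ∫ ω, ((X ω ^ n * Real.exp (-X ω) / n.factorial : ℝ) : ℂ) * z ^ n ∂P
      = (mixedPoissonProb P X n : ℂ) * z ^ n := by
    rw [integral_mul_const, integral_complex_ofReal, integral_div, mixedPoissonProb]
  simp_rw [← hintegral]
  refine hasSum_integral_of_dominated_convergence
    (fun n ω => X ω ^ n * Real.exp (-X ω) / n.factorial) (fun n => ?_) (fun n => ?_)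
    (.of_forall fun ω => (Real.hasSum_pow_mul_exp_neg_div_factorial (X ω)).summable) ?_
    (.of_forall fun ω => ?_)
  · have : Continuous fun x : ℝ => ((x ^ n * Real.exp (-x) / n.factorial : ℝ) : ℂ) * z ^ n := by
      fun_prop
    exact this.comp_aestronglyMeasurable hX
  · filter_upwards [hX0] with ω (hω : 0 ≤ X ω)
    rw [norm_mul, norm_pow, Complex.norm_real, Real.norm_of_nonneg (by positivity)]
    exact mul_le_of_le_one_right (by positivity) (pow_le_one₀ (norm_nonneg z) hz)
  · simp_rw [(Real.hasSum_pow_mul_exp_neg_div_factorial _).tsum_eq]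
    exact integrable_const 1
  · have h := (NormedSpace.expSeries_div_hasSum_exp (z * X ω)).mul_right (exp (-X ω))
    rw [← exp_eq_exp_ℂ, ← exp_add, ← sub_eq_add_neg, ← sub_one_mul] at h
    refine h.congr_fun fun n => ?_
    push_cast
    ring

theorem integrable_of_integral_sub_sq_ne_zero [IsFiniteMeasure P] (hX : AEStronglyMeasurable X P)
    (c : ℝ) (h : ∫ ω, (X ω - c) ^ 2 ∂P ≠ 0) : Integrable X P := by
  have hsq : Integrable (fun ω => (X ω - c) ^ 2) P := by
    by_contra hc
    exact h (integral_undef hc)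
  have hL2 : MemLp (fun ω => X ω - c) 2 P :=
    (memLp_two_iff_integrable_sq (hX.sub aestronglyMeasurable_const)).2 hsq
  simpa using (integrable_add_const_iff (c := c)).2 (hL2.integrable one_le_two)

theorem integrable_exp_mul_of_re_nonpos [IsFiniteMeasure P] (hX : AEStronglyMeasurable X P)
    (hX0 : 0 ≤ᵐ[P] X) {c : ℂ} (hc : c.re ≤ 0) : Integrable (fun ω => exp (c * X ω)) P := by
  refine Integrable.mono' (integrable_const 1) ?_ ?_
  · exact (by fun_prop : Continuous fun x : ℝ => exp (c * x)).comp_aestronglyMeasurable hX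
  · filter_upwards [hX0] with ω (hω : 0 ≤ X ω)
    rw [norm_exp, Real.exp_le_one_iff]
    simpa using mul_nonpos_of_nonpos_of_nonneg hc hω

theorem norm_integral_exp_sub_integral_exp_I_mul_le [IsFiniteMeasure P]
    (hX : Integrable X P) (hX0 : 0 ≤ᵐ[P] X) (s : ℝ) :
    ‖∫ ω, exp ((exp (I * s) - 1) * X ω) ∂P - ∫ ω, exp (I * s * X ω) ∂P‖
      ≤ 2 * s ^ 2 * ∫ ω, X ω ∂P := by
  have hre : (exp (I * s) - 1).re ≤ 0 := by
    simpa [exp_re] using Real.cos_le_one s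
  have hreI : (I * s).re ≤ 0 := by simp
  rw [← integral_sub (integrable_exp_mul_of_re_nonpos hX.1 hX0 hre)
    (integrable_exp_mul_of_re_nonpos hX.1 hX0 hreI), ← integral_const_mul]
  refine norm_integral_le_of_norm_le (hX.const_mul _) ?_
  filter_upwards [hX0] with ω (hω : 0 ≤ X ω)
  calc ‖exp ((exp (I * s) - 1) * X ω) - exp (I * s * X ω)‖
      ≤ ‖(exp (I * s) - 1) * X ω - I * s * X ω‖ :=
        norm_exp_sub_exp_le_of_re_nonpos (by simpa using mul_nonpos_of_nonpos_of_nonneg hre hω)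
          (by simp)
    _ = ‖exp (I * s) - 1 - I * s‖ * X ω := by
        rw [← sub_mul, norm_mul, norm_real, Real.norm_of_nonneg hω]
    _ ≤ 2 * s ^ 2 * X ω := by
        gcongr
        exact norm_exp_I_mul_ofReal_sub_one_sub_le s

theorem norm_tsum_mixedPoissonProb_mul_exp_sub_integral_exp_le [IsFiniteMeasure P]
    (hX : Integrable X P) (hX0 : 0 ≤ᵐ[P] X) (t a b : ℝ) :
    ‖∑' n : ℕ, (mixedPoissonProb P X n : ℂ) * exp (I * ↑(t * ((n - a) / b)))
        - ∫ ω, exp (I * ↑(t * ((X ω - a) / b))) ∂P‖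
      ≤ 2 * t ^ 2 * ((∫ ω, X ω ∂P) / b ^ 2) := by
  set s := t / b
  set c := exp (-(I * ↑(s * a)))
  have hsum : ∑' n : ℕ, (mixedPoissonProb P X n : ℂ) * exp (I * ↑(t * ((n - a) / b)))
      = c * ∫ ω, exp ((exp (I * s) - 1) * X ω) ∂P := by
    rw [← ((hasSum_mixedPoissonProb_mul_pow hX.1 hX0 (by simp [norm_exp])).mul_left c).tsum_eq]
    congr with n
    rw [← exp_nat_mul, mul_left_comm, ← exp_add]
    congr 2
    push_cast [s]
    ring
  have hchar : ∫ ω, exp (I * ↑(t * ((X ω - a) / b))) ∂P = c * ∫ ω, exp (I * s * X ω) ∂P := by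
    rw [← integral_const_mul]
    congr with ω
    rw [← exp_add]
    congr 1
    push_cast [s]
    ring
  rw [hsum, hchar, ← mul_sub, norm_mul, show ‖c‖ = 1 by simp [c, norm_exp], one_mul]
  calc _ ≤ 2 * s ^ 2 * ∫ ω, X ω ∂P := norm_integral_exp_sub_integral_exp_I_mul_le hX hX0 s
    _ = _ := by ring

end

theorem stmt_17_general {Ω : Type*} [MeasurableSpace Ω] (P : Measure Ω) [IsProbabilityMeasure P]
    (X : ℕ → Ω → ℝ) (m σ : ℕ → ℝ)
    (hmeas : ∀ j, Measurable (X j))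
    (hnonneg : ∀ j ω, 0 ≤ X j ω)
    (hm : ∀ j, m j = ∫ ω, X j ω ∂P)
    (hσpos : ∀ j, 0 < σ j)
    (hσ : ∀ j, σ j ^ 2 = ∫ ω, (X j ω - m j) ^ 2 ∂P)
    (hmσ : Tendsto (fun j => m j / σ j ^ 2) atTop (nhds 0)) :
    ∀ t : ℝ, Tendsto (fun j =>
        ‖(∑' n : ℕ, (((∫ ω, X j ω ^ n * Real.exp (-X j ω) ∂P) / (n.factorial : ℝ) : ℝ) : ℂ) *
              Complex.exp (Complex.I * Complex.ofReal (t * (((n : ℝ) - m j) / σ j)))) -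
          ∫ ω, Complex.exp (Complex.I * Complex.ofReal (t * ((X j ω - m j) / σ j))) ∂P‖)
      atTop (nhds 0) := by
  intro t
  have hX (j : ℕ) : Integrable (X j) P :=
    integrable_of_integral_sub_sq_ne_zero (hmeas j).aestronglyMeasurable (m j)
      (hσ j ▸ (pow_pos (hσpos j) 2).ne')
  refine squeeze_zero (fun _ => norm_nonneg _) (fun j => ?_)
    (by simpa using hmσ.const_mul (2 * t ^ 2))
  refine (norm_tsum_mixedPoissonProb_mul_exp_sub_integral_exp_le (hX j)
    (.of_forall (hnonneg j)) t (m j) (σ j)).trans_eq ?_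
  rw [hm j]

/-- Characteristic-function comparison for standardized mixed Poisson variables.
Let `X_j ≥ 0` be random variables with means `m_j` and standard deviations `σ_j`,
`X̃_j = (X_j - m_j)/σ_j`, and assume `σ_j → ∞`, `m_j/σ_j² → 0` and
`limsup_j E[exp(λ|X̃_j|)] ≤ C` for all `0 < λ < λ₀`. Let `Y_j` be the randomized Poisson
variables with `P(Y_j = n) = E[X_jⁿ e^{-X_j}]/n!` and `Ỹ_j = (Y_j - m_j)/σ_j`. Then for
every `t ∈ ℝ`, `|E[e^{itỸ_j}] - E[e^{itX̃_j}]| → 0` as `j → ∞`. -/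
theorem stmt_17 {Ω : Type*} [MeasurableSpace Ω] (P : Measure Ω) [IsProbabilityMeasure P]
    (X : ℕ → Ω → ℝ) (m σ : ℕ → ℝ) (C lam₀ : ℝ) (hlam₀ : 0 < lam₀)
    (hmeas : ∀ j, Measurable (X j))
    (hnonneg : ∀ j ω, 0 ≤ X j ω)
    (hm : ∀ j, m j = ∫ ω, X j ω ∂P)
    (hσpos : ∀ j, 0 < σ j)
    (hσ : ∀ j, σ j ^ 2 = ∫ ω, (X j ω - m j) ^ 2 ∂P)
    (hσtop : Tendsto σ atTop atTop)
    (hmσ : Tendsto (fun j => m j / σ j ^ 2) atTop (nhds 0))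
    (hexp : ∀ lam : ℝ, 0 < lam → lam < lam₀ →
      limsup (fun j => ∫ ω, Real.exp (lam * |(X j ω - m j) / σ j|) ∂P) atTop ≤ C) :
    ∀ t : ℝ, Tendsto (fun j =>
        ‖(∑' n : ℕ, (((∫ ω, X j ω ^ n * Real.exp (-X j ω) ∂P) / (n.factorial : ℝ) : ℝ) : ℂ) *
              Complex.exp (Complex.I * Complex.ofReal (t * (((n : ℝ) - m j) / σ j)))) -
          ∫ ω, Complex.exp (Complex.I * Complex.ofReal (t * ((X j ω - m j) / σ j))) ∂P‖)
      atTop (nhds 0) :=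
  stmt_17_general P X m σ hmeas hnonneg hm hσpos hσ hmσ
end
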